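/- arXiv:1910.14365 — 10 statements merged into one kernel-verified Lean document; each statement's English description precedes it below -/
import Mathlib

section
/- Let a, b, c, d be real numbers and let (J_n)_{n≥0} satisfy J_{n+4} = a·J_{n+3} + b·J_{n+2} + c·J_{n+1} + d·J_n with J_0 = J_1 = 0, J_2 = 1, J_3 = a. Let (R_n)_{n≥-3} satisfy R_{n+1} = a·R_n + b·R_{n-1} + c·R_{n-2} + d·R_{n-3} for n ≥ 0, with arbitrary real initial values R_{-3}, R_{-2}, R_{-1}, R_0. Then for all n ≥ 0, R_n = d·J_{n+1}·R_{-3} + (c·J_{n+1} + d·J_n)·R_{-2} + (J_{n+3} - a·J_{n+2})·R_{-1} + J_{n+2}·R_0. -/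
theorem stmt_4 (a b c d : ℝ)
    (J : ℕ → ℝ)
    (hJ0 : J 0 = 0) (hJ1 : J 1 = 0) (hJ2 : J 2 = 1) (hJ3 : J 3 = a)
    (hJ : ∀ n : ℕ, J (n + 4) = a * J (n + 3) + b * J (n + 2) + c * J (n + 1) + d * J n)
    (R : ℤ → ℝ)
    (hR : ∀ n : ℕ, R ((n : ℤ) + 1) = a * R n + b * R ((n : ℤ) - 1) + c * R ((n : ℤ) - 2) + d * R ((n : ℤ) - 3)) :
    ∀ n : ℕ, R n = d * J (n + 1) * R (-3) + (c * J (n + 1) + d * J n) * R (-2)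
      + (J (n + 3) - a * J (n + 2)) * R (-1) + J (n + 2) * R 0 := by
  have hJ4 := hJ 0
  have hJ5 := hJ 1
  have hJ6 := hJ 2
  have hr0 := hR 0
  have hr1 := hR 1
  have hr2 := hR 2
  norm_num at hr0 hr1 hr2 hJ4 hJ5 hJ6
  intro n
  induction n using Nat.strong_induction_on with
  | _ n ih =>
    match n with
    | 0 => simp [hJ0, hJ1, hJ2, hJ3]
    | 1 =>
      rw [show (1:ℕ)+1 = 2 from rfl, show (1:ℕ)+3 = 4 from rfl, show (1:ℕ)+2 = 3 from rfl]
      push_cast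
      rw [hr0, hJ4, hJ0, hJ1, hJ2, hJ3]; ring
    | 2 =>
      rw [show (2:ℕ)+1 = 3 from rfl, show (2:ℕ)+3 = 5 from rfl, show (2:ℕ)+2 = 4 from rfl]
      push_cast
      rw [hr1, hr0, hJ5, hJ4, hJ0, hJ1, hJ2, hJ3]; ring
    | 3 =>
      rw [show (3:ℕ)+1 = 4 from rfl, show (3:ℕ)+3 = 6 from rfl, show (3:ℕ)+2 = 5 from rfl]
      push_cast
      rw [hr2, hr1, hr0, hJ6, hJ5, hJ4, hJ0, hJ1, hJ2, hJ3]; ring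
    | (m+4) =>
      have h0 := ih m (by omega)
      have h1 := ih (m+1) (by omega)
      have h2 := ih (m+2) (by omega)
      have h3 := ih (m+3) (by omega)
      have hr := hR (m+3)
      rw [show ((m+3:ℕ):ℤ)+1 = ((m:ℤ)+4) from by push_cast; ring,
          show ((m+3:ℕ):ℤ)-1 = ((m:ℤ)+2) from by push_cast; ring,
          show ((m+3:ℕ):ℤ)-2 = ((m:ℤ)+1) from by push_cast; ring,
          show ((m+3:ℕ):ℤ)-3 = ((m:ℤ)) from by push_cast; ring,
          show ((m+3:ℕ):ℤ) = ((m:ℤ)+3) from by push_cast; ring] at hr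
      push_cast at h0 h1 h2 h3 ⊢
      have hJ5' := hJ (m+1)
      have hJ6' := hJ (m+2)
      have hJ7' := hJ (m+3)
      rw [show m+4+1 = m+1+4 from by omega, show m+4+3 = m+3+4 from by omega,
          show m+4+2 = m+2+4 from by omega] at *
      rw [hr, h0, h1, h2, h3, hJ5', hJ6', hJ7',
          show m+1+3 = m+4 from by omega, show m+2+3 = m+1+4 from by omega,
          show m+3+3 = m+2+4 from by omega, hJ5', hJ6',
          show m+1+2 = m+3 from by omega, show m+2+2 = m+4 from by omega,
          show m+3+2 = m+1+4 from by omega, hJ5',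
          show m+1+1 = m+2 from by omega, show m+2+1 = m+3 from by omega,
          show m+3+1 = m+4 from by omega, hJ m]
      ring
end

section
/- Let a, b, c, d be real numbers, let (J_n) satisfy J_{n+4} = a·J_{n+3} + b·J_{n+2} + c·J_{n+1} + d·J_n with J_0 = J_1 = 0, J_2 = 1, J_3 = a, and let (S_n)_{n≥-3} satisfy S_{n+1} = -a·S_n + b·S_{n-1} - c·S_{n-2} + d·S_{n-3} for n ≥ 0. Then for all n ≥ 0, S_n = (-1)^{n+1}·[ d·J_{n+1}·S_{-3} - (c·J_{n+1} + d·J_n)·S_{-2} + (J_{n+3} - a·J_{n+2})·S_{-1} - J_{n+2}·S_0 ]. -/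
theorem stmt_5 (a b c d : ℝ)
    (J : ℕ → ℝ)
    (hJ0 : J 0 = 0) (hJ1 : J 1 = 0) (hJ2 : J 2 = 1) (hJ3 : J 3 = a)
    (hJ : ∀ n : ℕ, J (n + 4) = a * J (n + 3) + b * J (n + 2) + c * J (n + 1) + d * J n)
    (S : ℤ → ℝ)
    (hS : ∀ n : ℕ, S ((n : ℤ) + 1) = -a * S n + b * S ((n : ℤ) - 1) - c * S ((n : ℤ) - 2) + d * S ((n : ℤ) - 3)) :
    ∀ n : ℕ, S n = (-1 : ℝ) ^ (n + 1) * (d * J (n + 1) * S (-3) - (c * J (n + 1) + d * J n) * S (-2)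
      + (J (n + 3) - a * J (n + 2)) * S (-1) - J (n + 2) * S 0) := by
  set F : ℕ → ℝ := fun n => (-1 : ℝ) ^ (n + 1) * (d * J (n + 1) * S (-3)
      - (c * J (n + 1) + d * J n) * S (-2)
      + (J (n + 3) - a * J (n + 2)) * S (-1) - J (n + 2) * S 0) with hF
  suffices h : ∀ m : ℕ, S m = F m ∧ S (m+1) = F (m+1) ∧ S (m+2) = F (m+2) ∧ S (m+3) = F (m+3) by
    exact fun n => (h n).1
  have E0 := hS 0
  have E1 := hS 1
  have E2 := hS 2
  push_cast at E0 E1 E2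
  norm_num at E0 E1 E2
  have e4 : J 4 = a * J 3 + b * J 2 + c * J 1 + d * J 0 := hJ 0
  have e5 : J 5 = a * J 4 + b * J 3 + c * J 2 + d * J 1 := hJ 1
  have e6 : J 6 = a * J 5 + b * J 4 + c * J 3 + d * J 2 := hJ 2
  intro m
  induction m with
  | zero =>
    refine ⟨?_, ?_, ?_, ?_⟩ <;> push_cast <;> simp only [hF] <;>
      norm_num <;> simp only [E2, E1, E0, e6, e5, e4, hJ0, hJ1, hJ2, hJ3] <;> ring
  | succ k ih =>
    obtain ⟨i0, i1, i2, i3⟩ := ih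
    refine ⟨?_, ?_, ?_, ?_⟩
    · exact i1
    · exact i2
    · exact i3
    · show S ((k + 4 : ℕ) : ℤ) = F (k + 4)
      have Ek := hS (k + 3)
      push_cast at Ek
      rw [show (k:ℤ)+3+1 = (k:ℤ)+4 by ring, show (k:ℤ)+3-1 = (k:ℤ)+2 by ring,
        show (k:ℤ)+3-2 = (k:ℤ)+1 by ring, show (k:ℤ)+3-3 = (k:ℤ) by ring] at Ek
      push_cast at i1 i2 i3 ⊢
      rw [Ek, i0, i1, i2, i3]
      have f4 : J (k+4) = a * J (k+3) + b * J (k+2) + c * J (k+1) + d * J k := hJ k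
      have f5 : J (k+5) = a * J (k+4) + b * J (k+3) + c * J (k+2) + d * J (k+1) := hJ (k+1)
      have f6 : J (k+6) = a * J (k+5) + b * J (k+4) + c * J (k+3) + d * J (k+2) := hJ (k+2)
      have f7 : J (k+7) = a * J (k+6) + b * J (k+5) + c * J (k+4) + d * J (k+3) := hJ (k+3)
      simp only [hF, show k+1+1 = k+2 from rfl, show k+1+2 = k+3 from rfl,
        show k+1+3 = k+4 from rfl, show k+2+1 = k+3 from rfl, show k+2+2 = k+4 from rfl,
        show k+2+3 = k+5 from rfl, show k+3+1 = k+4 from rfl, show k+3+2 = k+5 from rfl,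
        show k+3+3 = k+6 from rfl, show k+4+1 = k+5 from rfl, show k+4+2 = k+6 from rfl,
        show k+4+3 = k+7 from rfl]
      rw [f7, f6, f5, f4]
      ring
end

section
/- Let a, b, c, d be real numbers with d ≠ 0, and let (J_n) satisfy J_{n+4} = a·J_{n+3} + b·J_{n+2} + c·J_{n+1} + d·J_n with J_0 = J_1 = 0, J_2 = 1, J_3 = a. Suppose (x_n)_{n≥-2}, (y_n)_{n≥-2} are real sequences with x_n·y_n ≠ 0 for all n ≥ -2, satisfying x_{n+1} = (a·y_{n-2}·x_{n-1}·y_n + b·x_{n-1}·y_{n-2} + c·y_{n-2} + d)/(y_{n-2}·x_{n-1}·y_n) and y_{n+1} = (a·x_{n-2}·y_{n-1}·x_n + b·y_{n-1}·x_{n-2} + c·x_{n-2} + d)/(x_{n-2}·y_{n-1}·x_n) for all n ≥ 0. Then for all n ≥ 0, x_{2n+1} = (d·J_{2n+2} + (c·J_{2n+2} + d·J_{2n+1})·y_{-2} + (J_{2n+4} - a·J_{2n+3})·x_{-1}·y_{-2} + J_{2n+3}·y_0·x_{-1}·y_{-2}) / (d·J_{2n+1} + (c·J_{2n+1} + d·J_{2n})·y_{-2}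 + (J_{2n+3} - a·J_{2n+2})·x_{-1}·y_{-2} + J_{2n+2}·y_0·x_{-1}·y_{-2}). -/
def Kseq (a b c d k1 k2 k3 : ℝ) : ℕ → ℝ
  | 0 => 1
  | 1 => k1
  | 2 => k2
  | 3 => k3
  | (n+4) => a * Kseq a b c d k1 k2 k3 (n+3) + b * Kseq a b c d k1 k2 k3 (n+2)
      + c * Kseq a b c d k1 k2 k3 (n+1) + d * Kseq a b c d k1 k2 k3 n

lemma Kseq_rec (a b c d k1 k2 k3 : ℝ) (n : ℕ) :
    Kseq a b c d k1 k2 k3 (n+4) = a * Kseq a b c d k1 k2 k3 (n+3) + b * Kseq a b c d k1 k2 k3 (n+2)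
      + c * Kseq a b c d k1 k2 k3 (n+1) + d * Kseq a b c d k1 k2 k3 n := rfl

lemma Kseq_eq (a b c d : ℝ) (J : ℕ → ℝ)
    (hJ0 : J 0 = 0) (hJ1 : J 1 = 0) (hJ2 : J 2 = 1) (hJ3 : J 3 = a)
    (hJ : ∀ n : ℕ, J (n + 4) = a * J (n + 3) + b * J (n + 2) + c * J (n + 1) + d * J n)
    (X Y Z : ℝ) : ∀ m : ℕ, Kseq a b c d Y (X*Y) (Z*(X*Y)) (m+3)
      = d * J (m+1) + (c * J (m+1) + d * J m) * Y
        + (J (m+3) - a * J (m+2)) * X * Y + J (m+2) * Z * X * Y := by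
  intro m
  induction m using Nat.strong_induction_on with
  | _ m ih =>
    match m with
    | 0 => simp [Kseq, hJ0, hJ1, hJ2, hJ3]; ring
    | 1 => simp [Kseq, hJ0, hJ1, hJ2, hJ3, hJ 0]; ring
    | 2 => simp [Kseq, hJ0, hJ1, hJ2, hJ3, hJ 0, hJ 1]; ring
    | 3 => simp [Kseq, hJ0, hJ1, hJ2, hJ3, hJ 0, hJ 1, hJ 2]; ring
    | (m+4) =>
      have h7 : m + 4 + 3 = (m + 3) + 4 := by ring
      rw [h7, show Kseq a b c d Y (X*Y) (Z*(X*Y)) ((m+3)+4)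
          = a * Kseq a b c d Y (X*Y) (Z*(X*Y)) (m+3+3) + b * Kseq a b c d Y (X*Y) (Z*(X*Y)) (m+3+2)
            + c * Kseq a b c d Y (X*Y) (Z*(X*Y)) (m+3+1) + d * Kseq a b c d Y (X*Y) (Z*(X*Y)) (m+3) from rfl]
      rw [show m+3+3 = (m+3)+3 from rfl, show m+3+2 = (m+2)+3 from rfl, show m+3+1 = (m+1)+3 from rfl,
          show (m+3 : ℕ) = m+0+3 from rfl]
      rw [ih (m+3) (by omega), ih (m+2) (by omega), ih (m+1) (by omega), ih (m+0) (by omega)]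
      simp only [add_assoc]
      norm_num
      have e7 := hJ (m+3); have e6 := hJ (m+2); have e5 := hJ (m+1); have e4 := hJ m
      simp only [add_assoc] at e7 e6 e5 e4
      norm_num at e7 e6 e5 e4
      rw [e7, e6, e5, e4]
      ring

theorem stmt_7 (a b c d : ℝ) (hd : d ≠ 0)
    (J : ℕ → ℝ)
    (hJ0 : J 0 = 0) (hJ1 : J 1 = 0) (hJ2 : J 2 = 1) (hJ3 : J 3 = a)
    (hJ : ∀ n : ℕ, J (n + 4) = a * J (n + 3) + b * J (n + 2) + c * J (n + 1) + d * J n)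
    (x y : ℤ → ℝ)
    (hxy : ∀ n : ℤ, -2 ≤ n → x n * y n ≠ 0)
    (hx : ∀ n : ℕ, x ((n : ℤ) + 1) =
      (a * y ((n : ℤ) - 2) * x ((n : ℤ) - 1) * y n + b * x ((n : ℤ) - 1) * y ((n : ℤ) - 2)
        + c * y ((n : ℤ) - 2) + d) / (y ((n : ℤ) - 2) * x ((n : ℤ) - 1) * y n))
    (hy : ∀ n : ℕ, y ((n : ℤ) + 1) =
      (a * x ((n : ℤ) - 2) * y ((n : ℤ) - 1) * x n + b * y ((n : ℤ) - 1) * x ((n : ℤ) - 2)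
        + c * x ((n : ℤ) - 2) + d) / (x ((n : ℤ) - 2) * y ((n : ℤ) - 1) * x n)) :
    ∀ n : ℕ, x (2 * (n : ℤ) + 1) =
      (d * J (2 * n + 2) + (c * J (2 * n + 2) + d * J (2 * n + 1)) * y (-2)
        + (J (2 * n + 4) - a * J (2 * n + 3)) * x (-1) * y (-2)
        + J (2 * n + 3) * y 0 * x (-1) * y (-2))
      / (d * J (2 * n + 1) + (c * J (2 * n + 1) + d * J (2 * n)) * y (-2)
        + (J (2 * n + 3) - a * J (2 * n + 2)) * x (-1) * y (-2)
        + J (2 * n + 2) * y 0 * x (-1) * y (-2)) := by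

  set X := x (-1) with hXdef
  set Y := y (-2) with hYdef
  set Z := y 0 with hZdef
  have hX : X ≠ 0 := fun h => hxy (-1) (by norm_num) (by rw [← hXdef, h, zero_mul])
  have hY : Y ≠ 0 := fun h => hxy (-2) (by norm_num) (by rw [← hYdef, h, mul_zero])
  have hZ : Z ≠ 0 := fun h => hxy 0 (by norm_num) (by rw [← hZdef, h, mul_zero])
  set K := Kseq a b c d Y (X*Y) (Z*(X*Y)) with hKdef
  have Krec : ∀ m : ℕ, K (m+4) = a * K (m+3) + b * K (m+2) + c * K (m+1) + d * K m :=
    fun m => rfl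
  have key : ∀ n : ℕ, K (2*n) ≠ 0 ∧ K (2*n+1) ≠ 0 ∧
      y (2*(n:ℤ)-2) = K (2*n+1) / K (2*n) ∧
      x (2*(n:ℤ)-1) = K (2*n+2) / K (2*n+1) ∧
      y (2*(n:ℤ)) = K (2*n+3) / K (2*n+2) := by
    intro n
    induction n with
    | zero =>
      have k0 : K 0 = 1 := rfl
      have k1 : K 1 = Y := rfl
      have k2 : K 2 = X*Y := rfl
      have k3 : K 3 = Z*(X*Y) := rfl
      refine ⟨?_, ?_, ?_, ?_, ?_⟩
      · rw [show 2*0 = 0 from rfl, k0]; norm_num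
      · rw [show 2*0+1 = 1 from rfl, k1]; exact hY
      · rw [show 2*0+1 = 1 from rfl, show 2*0 = 0 from rfl, k0, k1,
          show 2*((0:ℕ):ℤ)-2 = -2 from by norm_num, div_one]
      · rw [show 2*0+2 = 2 from rfl, show 2*0+1 = 1 from rfl, k1, k2,
          show 2*((0:ℕ):ℤ)-1 = -1 from by norm_num, mul_div_assoc,
          div_self hY, mul_one]
      · rw [show 2*0+3 = 3 from rfl, show 2*0+2 = 2 from rfl, k2, k3,
          show 2*((0:ℕ):ℤ) = 0 from by norm_num, mul_div_assoc,
          div_self (mul_ne_zero hX hY), mul_one]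
    | succ n ih =>
      obtain ⟨hA, hB, e1, e2, e3⟩ := ih
      -- nonzeroness of x(2n-1), y(2n)
      have hxn : x (2*(n:ℤ)-1) ≠ 0 := fun h => by
        have := hxy (2*(n:ℤ)-1) (by omega); rw [h, zero_mul] at this; exact this rfl
      have hyn : y (2*(n:ℤ)) ≠ 0 := fun h => by
        have := hxy (2*(n:ℤ)) (by omega); rw [h, mul_zero] at this; exact this rfl
      have hC : K (2*n+2) ≠ 0 := fun h => by rw [e2, h, zero_div] at hxn; exact hxn rfl
      have hD : K (2*n+3) ≠ 0 := fun h => by rw [e3, h, zero_div] at hyn; exact hyn rfl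
      -- x(2n+1)
      have hx' := hx (2*n)
      push_cast at hx'
      rw [e1, e2, e3] at hx'
      have ex : x (2*(n:ℤ)+1) = K (2*n+4) / K (2*n+3) := by
        rw [hx', show (2*n+4 : ℕ) = 2*n+4 from rfl, Krec (2*n)]
        field_simp
      have hxn1 : x (2*(n:ℤ)+1) ≠ 0 := fun h => by
        have := hxy (2*(n:ℤ)+1) (by omega); rw [h, zero_mul] at this; exact this rfl
      have hE : K (2*n+4) ≠ 0 := fun h => by rw [ex, h, zero_div] at hxn1; exact hxn1 rfl
      -- y(2n+2)
      have hy' := hy (2*n+1)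
      push_cast at hy'
      have i1 : 2*(n:ℤ)+1-2 = 2*(n:ℤ)-1 := by ring
      have i2 : 2*(n:ℤ)+1-1 = 2*(n:ℤ) := by ring
      have i3 : 2*(n:ℤ)+1+1 = 2*(n:ℤ)+2 := by ring
      rw [i1, i2, i3, e2, e3, ex] at hy'
      have ey : y (2*(n:ℤ)+2) = K (2*n+5) / K (2*n+4) := by
        rw [hy', show (2*n+5 : ℕ) = (2*n+1)+4 from by ring, Krec (2*n+1),
          show (2*n+1)+3 = 2*n+4 from by ring, show (2*n+1)+2 = 2*n+3 from by ring,
          show (2*n+1)+1 = 2*n+2 from by ring]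
        field_simp
      refine ⟨?_, ?_, ?_, ?_, ?_⟩
      · rw [show 2*(n+1) = 2*n+2 from by ring]; exact hC
      · rw [show 2*(n+1)+1 = 2*n+3 from by ring]; exact hD
      · push_cast
        rw [show 2*((n:ℤ)+1)-2 = 2*(n:ℤ) from by ring, show 2*(n+1)+1 = 2*n+3 from by ring,
          show 2*(n+1) = 2*n+2 from by ring]; exact e3
      · push_cast
        rw [show 2*((n:ℤ)+1)-1 = 2*(n:ℤ)+1 from by ring, show 2*(n+1)+2 = 2*n+4 from by ring,
          show 2*(n+1)+1 = 2*n+3 from by ring]; exact ex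
      · push_cast
        rw [show 2*((n:ℤ)+1) = 2*(n:ℤ)+2 from by ring, show 2*(n+1)+3 = 2*n+5 from by ring,
          show 2*(n+1)+2 = 2*n+4 from by ring]; exact ey
  intro n
  obtain ⟨_, _, _, e2', _⟩ := key (n+1)
  push_cast at e2'
  rw [show 2*((n:ℤ)+1)-1 = 2*(n:ℤ)+1 from by ring] at e2'
  rw [e2', show 2*(n+1)+2 = (2*n+1)+3 from by ring, show 2*(n+1)+1 = (2*n)+3 from by ring,
    hKdef, Kseq_eq a b c d J hJ0 hJ1 hJ2 hJ3 hJ X Y Z (2*n+1),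
    Kseq_eq a b c d J hJ0 hJ1 hJ2 hJ3 hJ X Y Z (2*n),
    show 2*n+1+1 = 2*n+2 from by ring, show 2*n+1+3 = 2*n+4 from by ring,
    show 2*n+1+2 = 2*n+3 from by ring]
end

section
/- Under the hypotheses of the closed-form theorem for the system (well-defined solution with x_n·y_n ≠ 0, d ≠ 0, J_n the fundamental fourth-order recurrence sequence), for all n ≥ 0: y_{2n+1} = (d·J_{2n+2} + (c·J_{2n+2} + d·J_{2n+1})·x_{-2} + (J_{2n+4} - a·J_{2n+3})·y_{-1}·x_{-2} + J_{2n+3}·x_0·y_{-1}·x_{-2}) / (d·J_{2n+1} + (c·J_{2n+1} + d·J_{2n})·x_{-2} + (J_{2n+3} - a·J_{2n+2})·y_{-1}·x_{-2} + J_{2n+2}·x_0·y_{-1}·x_{-2}). -/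
theorem stmt_8 (a b c d : ℝ) (hd : d ≠ 0)
    (J : ℕ → ℝ)
    (hJ0 : J 0 = 0) (hJ1 : J 1 = 0) (hJ2 : J 2 = 1) (hJ3 : J 3 = a)
    (hJ : ∀ n : ℕ, J (n + 4) = a * J (n + 3) + b * J (n + 2) + c * J (n + 1) + d * J n)
    (x y : ℤ → ℝ)
    (hxy : ∀ n : ℤ, -2 ≤ n → x n * y n ≠ 0)
    (hx : ∀ n : ℕ, x ((n : ℤ) + 1) =
      (a * y ((n : ℤ) - 2) * x ((n : ℤ) - 1) * y n + b * x ((n : ℤ) - 1) * y ((n : ℤ) - 2)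
        + c * y ((n : ℤ) - 2) + d) / (y ((n : ℤ) - 2) * x ((n : ℤ) - 1) * y n))
    (hy : ∀ n : ℕ, y ((n : ℤ) + 1) =
      (a * x ((n : ℤ) - 2) * y ((n : ℤ) - 1) * x n + b * y ((n : ℤ) - 1) * x ((n : ℤ) - 2)
        + c * x ((n : ℤ) - 2) + d) / (x ((n : ℤ) - 2) * y ((n : ℤ) - 1) * x n)) :
    ∀ n : ℕ, y (2 * (n : ℤ) + 1) =
      (d * J (2 * n + 2) + (c * J (2 * n + 2) + d * J (2 * n + 1)) * x (-2)
        + (J (2 * n + 4) - a * J (2 * n + 3)) * y (-1) * x (-2)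
        + J (2 * n + 3) * x 0 * y (-1) * x (-2))
      / (d * J (2 * n + 1) + (c * J (2 * n + 1) + d * J (2 * n)) * x (-2)
        + (J (2 * n + 3) - a * J (2 * n + 2)) * y (-1) * x (-2)
        + J (2 * n + 2) * x 0 * y (-1) * x (-2)) := by
  have hxne : ∀ n : ℤ, -2 ≤ n → x n ≠ 0 := fun n hn => left_ne_zero_of_mul (hxy n hn)
  have hyne : ∀ n : ℤ, -2 ≤ n → y n ≠ 0 := fun n hn => right_ne_zero_of_mul (hxy n hn)
  -- interleaved chain
  set w : ℕ → ℝ := fun m => if Even m then x ((m : ℤ) - 2) else y ((m : ℤ) - 2) with hw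
  have hwne : ∀ m, w m ≠ 0 := by
    intro m
    simp only [hw]
    split
    · exact hxne ((m : ℤ) - 2) (by omega)
    · exact hyne ((m : ℤ) - 2) (by omega)
  set R : ℕ → ℝ := fun m => ∏ k ∈ Finset.range m, w k with hR
  have hRsucc : ∀ m, R (m + 1) = R m * w m := fun m => Finset.prod_range_succ w m
  have hRne : ∀ m, R m ≠ 0 := fun m =>
    Finset.prod_ne_zero_iff.mpr (fun k _ => hwne k)
  -- the multiplicative chain relation
  have key : ∀ m : ℕ, w (m + 3) * (w (m + 2) * w (m + 1) * w m) =
      a * w (m + 2) * w (m + 1) * w m + b * w (m + 1) * w m + c * w m + d := by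
    intro m
    rcases Nat.even_or_odd m with he | ho
    · have hm2 : m % 2 = 0 := Nat.even_iff.mp he
      have e0 : Even m := he
      have e1 : ¬ Even (m + 1) := by rw [Nat.even_iff]; omega
      have e2 : Even (m + 2) := by rw [Nat.even_iff]; omega
      have e3 : ¬ Even (m + 3) := by rw [Nat.even_iff]; omega
      have hw0 : w m = x ((m : ℤ) - 2) := if_pos e0
      have hw1 : w (m + 1) = y ((m : ℤ) - 1) := by
        have : w (m + 1) = y (((m + 1 : ℕ) : ℤ) - 2) := if_neg e1
        rw [this]; norm_num; ring_nf
      have hw2 : w (m + 2) = x (m : ℤ) := by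
        have : w (m + 2) = x (((m + 2 : ℕ) : ℤ) - 2) := if_pos e2
        rw [this]; norm_num
      have hw3 : w (m + 3) = y ((m : ℤ) + 1) := by
        have : w (m + 3) = y (((m + 3 : ℕ) : ℤ) - 2) := if_neg e3
        rw [this]; norm_num; ring_nf
      have hden : x ((m : ℤ) - 2) * y ((m : ℤ) - 1) * x (m : ℤ) ≠ 0 := by
        refine mul_ne_zero (mul_ne_zero ?_ ?_) ?_
        · exact hxne _ (by omega)
        · exact hyne _ (by omega)
        · exact hxne _ (by omega)
      have h := hy m
      rw [eq_div_iff hden] at h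
      rw [hw0, hw1, hw2, hw3]
      linarith [h]
    · have hm2 : m % 2 = 1 := Nat.odd_iff.mp ho
      have o0 : ¬ Even m := by rw [Nat.even_iff]; omega
      have e1 : Even (m + 1) := by rw [Nat.even_iff]; omega
      have e2 : ¬ Even (m + 2) := by rw [Nat.even_iff]; omega
      have e3 : Even (m + 3) := by rw [Nat.even_iff]; omega
      have hw0 : w m = y ((m : ℤ) - 2) := if_neg o0
      have hw1 : w (m + 1) = x ((m : ℤ) - 1) := by
        have : w (m + 1) = x (((m + 1 : ℕ) : ℤ) - 2) := if_pos e1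
        rw [this]; norm_num; ring_nf
      have hw2 : w (m + 2) = y (m : ℤ) := by
        have : w (m + 2) = y (((m + 2 : ℕ) : ℤ) - 2) := if_neg e2
        rw [this]; norm_num
      have hw3 : w (m + 3) = x ((m : ℤ) + 1) := by
        have : w (m + 3) = x (((m + 3 : ℕ) : ℤ) - 2) := if_pos e3
        rw [this]; norm_num; ring_nf
      have hden : y ((m : ℤ) - 2) * x ((m : ℤ) - 1) * y (m : ℤ) ≠ 0 := by
        refine mul_ne_zero (mul_ne_zero ?_ ?_) ?_
        · exact hyne _ (by omega)
        · exact hxne _ (by omega)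
        · exact hyne _ (by omega)
      have h := hx m
      rw [eq_div_iff hden] at h
      rw [hw0, hw1, hw2, hw3]
      linarith [h]
  -- R satisfies the linear recurrence
  have Rrec : ∀ m : ℕ, R (m + 4) = a * R (m + 3) + b * R (m + 2) + c * R (m + 1) + d * R m := by
    intro m
    have h1 : R (m + 1) = R m * w m := hRsucc m
    have h2 : R (m + 2) = R (m + 1) * w (m + 1) := hRsucc (m + 1)
    have h3 : R (m + 3) = R (m + 2) * w (m + 2) := hRsucc (m + 2)
    have h4 : R (m + 4) = R (m + 3) * w (m + 3) := hRsucc (m + 3)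
    have hk := key m
    rw [h4, h3, h2, h1]
    linear_combination (R m) * hk
  -- closed form
  set F : ℕ → ℝ := fun m => d * J (m + 1) + (c * J (m + 1) + d * J m) * x (-2)
      + (J (m + 3) - a * J (m + 2)) * y (-1) * x (-2)
      + J (m + 2) * x 0 * y (-1) * x (-2) with hF
  have Frec : ∀ m : ℕ, F (m + 4) = a * F (m + 3) + b * F (m + 2) + c * F (m + 1) + d * F m := by
    intro m
    simp only [hF]
    have h0 := hJ m
    have h1 := hJ (m + 1)
    have h2 := hJ (m + 2)
    have h3 := hJ (m + 3)
    linear_combination (d + c * x (-2)) * h1 + (d * x (-2)) * h0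
      + (y (-1) * x (-2)) * h3 + (-(a * y (-1) * x (-2)) + x 0 * y (-1) * x (-2)) * h2
  -- explicit small values
  have hw0 : w 0 = x (-2) := by simp [hw]
  have hw1 : w 1 = y (-1) := by norm_num [hw]
  have hw2 : w 2 = x 0 := by norm_num [hw]
  have hR0 : R 0 = 1 := by simp [hR]
  have hR1 : R 1 = x (-2) := by rw [hRsucc 0, hR0, hw0]; ring
  have hR2 : R 2 = x (-2) * y (-1) := by rw [hRsucc 1, hR1, hw1]
  have hR3 : R 3 = x (-2) * y (-1) * x 0 := by rw [hRsucc 2, hR2, hw2]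
  have hJ4 : J 4 = a * a + b := by
    have := hJ 0; norm_num [hJ0, hJ1, hJ2, hJ3] at this; linarith
  have hJ5 : J 5 = a * (a * a + b) + a * b + c := by
    have := hJ 1; rw [hJ1, hJ2, hJ3, hJ4] at this; linarith
  have hJ6 : J 6 = a * (a * (a * a + b) + a * b + c) + b * (a * a + b) + a * c + d := by
    have := hJ 2; rw [hJ2, hJ3, hJ4, hJ5] at this; linarith
  have base0 : R 3 = F 0 := by
    simp only [hF, hR3]; norm_num [hJ0, hJ1, hJ2, hJ3]; ring
  have base1 : R 4 = F 1 := by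
    have := Rrec 0
    norm_num [hR0, hR1, hR2, hR3] at this
    simp only [hF]
    norm_num [hJ1, hJ2, hJ3, hJ4, this]; ring
  have base2 : R 5 = F 2 := by
    have := Rrec 1
    have h4 := Rrec 0
    norm_num [hR0, hR1, hR2, hR3] at h4
    norm_num [hR1, hR2, hR3, h4] at this
    simp only [hF]
    norm_num [hJ2, hJ3, hJ4, hJ5, this]; ring
  have base3 : R 6 = F 3 := by
    have h4 := Rrec 0
    norm_num [hR0, hR1, hR2, hR3] at h4
    have h5 := Rrec 1
    norm_num [hR1, hR2, hR3, h4] at h5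
    have h6 := Rrec 2
    norm_num [hR2, hR3, h4, h5] at h6
    simp only [hF]
    norm_num [hJ3, hJ4, hJ5, hJ6, h6]; ring
  -- main identification by induction
  have main : ∀ m : ℕ, R (m + 3) = F m ∧ R (m + 4) = F (m + 1) ∧ R (m + 5) = F (m + 2)
      ∧ R (m + 6) = F (m + 3) := by
    intro m
    induction m with
    | zero => exact ⟨base0, base1, base2, base3⟩
    | succ k ih =>
      obtain ⟨i0, i1, i2, i3⟩ := ih
      refine ⟨i1, i2, i3, ?_⟩
      have hr := Rrec (k + 3)
      have hf := Frec k
      calc R (k + 1 + 6) = a * R (k + 6) + b * R (k + 5) + c * R (k + 4) + d * R (k + 3) := hr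
        _ = a * F (k + 3) + b * F (k + 2) + c * F (k + 1) + d * F k := by
            rw [i0, i1, i2, i3]
        _ = F (k + 1 + 3) := (hf).symm
  -- finish
  intro n
  have h0 : R (2 * n + 3) = F (2 * n) := (main (2 * n)).1
  have h1 : R (2 * n + 4) = F (2 * n + 1) := (main (2 * n)).2.1
  have hwv : w (2 * n + 3) = y (2 * (n : ℤ) + 1) := by
    have e3 : ¬ Even (2 * n + 3) := by simp [parity_simps]
    have : w (2 * n + 3) = y (((2 * n + 3 : ℕ) : ℤ) - 2) := if_neg e3
    rw [this]; push_cast; ring_nf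
  have hprod := hRsucc (2 * n + 3)
  rw [h0, h1, hwv] at hprod
  have hFne : F (2 * n) ≠ 0 := h0 ▸ hRne (2 * n + 3)
  have : y (2 * (n : ℤ) + 1) = F (2 * n + 1) / F (2 * n) := by
    field_simp
    linarith [hprod]
  rw [this]
end

section
/- Under the hypotheses of the closed-form theorem for the system, for all n ≥ 0: x_{2n+2} = (d·J_{2n+3} + (c·J_{2n+3} + d·J_{2n+2})·x_{-2} + (J_{2n+5} - a·J_{2n+4})·y_{-1}·x_{-2} + J_{2n+4}·x_0·y_{-1}·x_{-2}) / (d·J_{2n+2} + (c·J_{2n+2} + d·J_{2n+1})·x_{-2} + (J_{2n+4} - a·J_{2n+3})·y_{-1}·x_{-2} + J_{2n+3}·x_0·y_{-1}·x_{-2}). -/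
noncomputable def auxF (a b c d u v w : ℝ) : ℕ → ℝ
  | 0 => 1
  | 1 => u
  | 2 => v
  | 3 => w
  | n + 4 => a * auxF a b c d u v w (n+3) + b * auxF a b c d u v w (n+2)
      + c * auxF a b c d u v w (n+1) + d * auxF a b c d u v w n

lemma auxF_eq_J (a b c d u v w : ℝ) (J : ℕ → ℝ)
    (hJ0 : J 0 = 0) (hJ1 : J 1 = 0) (hJ2 : J 2 = 1) (hJ3 : J 3 = a)
    (hJ : ∀ n : ℕ, J (n + 4) = a * J (n + 3) + b * J (n + 2) + c * J (n + 1) + d * J n) :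
    ∀ m : ℕ, auxF a b c d u v w (m+3) =
      d * J (m+1) + (c * J (m+1) + d * J m) * u + (J (m+3) - a * J (m+2)) * v + J (m+2) * w := by
  have h4 : J 4 = a * a + b := by
    have h := hJ 0
    norm_num [hJ0, hJ1, hJ2, hJ3] at h
    linarith
  have h6 : J 6 = a * J 5 + b * J 4 + c * a + d := by
    have h := hJ 2
    norm_num [hJ2, hJ3] at h
    linarith
  have h5 : J 5 = a * (a*a+b) + a*b + c := by
    have h := hJ 1
    norm_num [hJ1, hJ2, hJ3, h4] at h
    linarith
  intro m
  induction m using Nat.strong_induction_on with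
  | _ m ih =>
    match m with
    | 0 => simp [auxF, hJ0, hJ1, hJ2, hJ3]; try ring
    | 1 =>
      show a * auxF a b c d u v w 3 + b * auxF a b c d u v w 2 + c * auxF a b c d u v w 1
          + d * auxF a b c d u v w 0 = _
      simp only [auxF]
      norm_num
      rw [hJ1, hJ2, hJ3, h4]
      ring
    | 2 =>
      show a * auxF a b c d u v w 4 + b * auxF a b c d u v w 3 + c * auxF a b c d u v w 2
          + d * auxF a b c d u v w 1 = _
      have h' : auxF a b c d u v w 4 = a*w + b*v + c*u + d := by
        show a * auxF a b c d u v w 3 + b * auxF a b c d u v w 2 + c * auxF a b c d u v w 1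
          + d * auxF a b c d u v w 0 = _
        simp [auxF]; try ring
      rw [h']
      simp only [auxF]
      norm_num
      rw [hJ2, hJ3, h5, h4]
      ring
    | 3 =>
      have e1 := ih 1 (by norm_num)
      have e2 := ih 2 (by norm_num)
      have e0 := ih 0 (by norm_num)
      show a * auxF a b c d u v w 5 + b * auxF a b c d u v w 4 + c * auxF a b c d u v w 3
          + d * auxF a b c d u v w 2 = _
      norm_num at e0 e1 e2 ⊢
      rw [e2, e1, e0, show auxF a b c d u v w 2 = v from rfl]
      rw [hJ0, hJ1, hJ2, hJ3, h6, h5, h4]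
      ring
    | (k+4) =>
      have e0 := ih k (by omega)
      have e1 := ih (k+1) (by omega)
      have e2 := ih (k+2) (by omega)
      have e3 := ih (k+3) (by omega)
      show a * auxF a b c d u v w (k+6) + b * auxF a b c d u v w (k+5) + c * auxF a b c d u v w (k+4)
          + d * auxF a b c d u v w (k+3) = _
      rw [show k+6 = (k+3)+3 from rfl, e3, show k+5 = (k+2)+3 from rfl, e2,
          show k+4 = (k+1)+3 from rfl, e1, e0]
      rw [show k+4+3 = (k+3)+4 from rfl, hJ (k+3), show k+4+2 = (k+2)+4 from rfl, hJ (k+2),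
          show k+4+1 = (k+1)+4 from rfl, hJ (k+1), hJ k]
      ring_nf

lemma step_alg (a b c d p q r s : ℝ) (hp : p ≠ 0) (hq : q ≠ 0) (hr : r ≠ 0) (hs : s ≠ 0) :
    (a * (q/p) * (r/q) * (s/r) + b * (r/q) * (q/p) + c * (q/p) + d) / ((q/p) * (r/q) * (s/r))
      = (a*s + b*r + c*q + d*p) / s := by
  field_simp

theorem stmt_9 (a b c d : ℝ) (hd : d ≠ 0)
    (J : ℕ → ℝ)
    (hJ0 : J 0 = 0) (hJ1 : J 1 = 0) (hJ2 : J 2 = 1) (hJ3 : J 3 = a)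
    (hJ : ∀ n : ℕ, J (n + 4) = a * J (n + 3) + b * J (n + 2) + c * J (n + 1) + d * J n)
    (x y : ℤ → ℝ)
    (hxy : ∀ n : ℤ, -2 ≤ n → x n * y n ≠ 0)
    (hx : ∀ n : ℕ, x ((n : ℤ) + 1) =
      (a * y ((n : ℤ) - 2) * x ((n : ℤ) - 1) * y n + b * x ((n : ℤ) - 1) * y ((n : ℤ) - 2)
        + c * y ((n : ℤ) - 2) + d) / (y ((n : ℤ) - 2) * x ((n : ℤ) - 1) * y n))
    (hy : ∀ n : ℕ, y ((n : ℤ) + 1) =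
      (a * x ((n : ℤ) - 2) * y ((n : ℤ) - 1) * x n + b * y ((n : ℤ) - 1) * x ((n : ℤ) - 2)
        + c * x ((n : ℤ) - 2) + d) / (x ((n : ℤ) - 2) * y ((n : ℤ) - 1) * x n)) :
    ∀ n : ℕ, x (2 * (n : ℤ) + 2) =
      (d * J (2 * n + 3) + (c * J (2 * n + 3) + d * J (2 * n + 2)) * x (-2)
        + (J (2 * n + 5) - a * J (2 * n + 4)) * y (-1) * x (-2)
        + J (2 * n + 4) * x 0 * y (-1) * x (-2))
      / (d * J (2 * n + 2) + (c * J (2 * n + 2) + d * J (2 * n + 1)) * x (-2)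
        + (J (2 * n + 4) - a * J (2 * n + 3)) * y (-1) * x (-2)
        + J (2 * n + 3) * x 0 * y (-1) * x (-2)) := by
  have hne : ∀ n : ℤ, -2 ≤ n → x n ≠ 0 ∧ y n ≠ 0 := fun n h => mul_ne_zero_iff.mp (hxy n h)
  have hx2 := (hne (-2) (by norm_num)).1
  have hy1 := (hne (-1) (by norm_num)).2
  have hx0 := (hne 0 (by norm_num)).1
  set F := auxF a b c d (x (-2)) (y (-1) * x (-2)) (x 0 * y (-1) * x (-2)) with hF
  have hF0 : F 0 = 1 := by rw [hF]; rfl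
  have hF1 : F 1 = x (-2) := by rw [hF]; rfl
  have hF2 : F 2 = y (-1) * x (-2) := by rw [hF]; rfl
  have hF3 : F 3 = x 0 * y (-1) * x (-2) := by rw [hF]; rfl
  have hFrec : ∀ m : ℕ, F (m+4) = a * F (m+3) + b * F (m+2) + c * F (m+1) + d * F m := by
    intro m; rw [hF]; rfl
  have hF1ne : F 1 ≠ 0 := by rw [hF1]; exact hx2
  have hF2ne : F 2 ≠ 0 := by rw [hF2]; exact mul_ne_zero hy1 hx2
  have hF3ne : F 3 ≠ 0 := by rw [hF3]; exact mul_ne_zero (mul_ne_zero hx0 hy1) hx2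
  have hym1eq : y (-1) = F 2 / F 1 := by
    rw [hF2, hF1, mul_div_assoc, div_self hx2, mul_one]
  have hx0eq : x 0 = F 3 / F 2 := by
    rw [hF3, hF2]
    field_simp
  have main : ∀ n : ℕ, F (2*n+2) ≠ 0 ∧ F (2*n+3) ≠ 0 ∧ F (2*n+4) ≠ 0 ∧ F (2*n+5) ≠ 0 ∧
      x (2*(n:ℤ)) = F (2*n+3) / F (2*n+2) ∧ y (2*(n:ℤ)+1) = F (2*n+4) / F (2*n+3) ∧
      x (2*(n:ℤ)+2) = F (2*n+5) / F (2*n+4) := by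
    intro n
    induction n with
    | zero =>
      have y1eq : y 1 = F 4 / F 3 := by
        have h := hy 0
        norm_num at h
        rw [h, show (4:ℕ) = 0+4 from rfl, hFrec 0, hF0, hF1, hF2, hF3]
        congr 1 <;> ring
      have hF4ne : F 4 ≠ 0 := by
        intro h0
        exact (hne 1 (by norm_num)).2 (by rw [y1eq, h0, zero_div])
      have x2eq : x 2 = F 5 / F 4 := by
        have h := hx 1
        norm_num at h
        rw [h, hym1eq, hx0eq, y1eq,
          step_alg a b c d (F 1) (F 2) (F 3) (F 4) hF1ne hF2ne hF3ne hF4ne,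
          show (5:ℕ) = 1+4 from rfl, hFrec 1]
      have hF5ne : F 5 ≠ 0 := by
        intro h0
        exact (hne 2 (by norm_num)).1 (by rw [x2eq, h0, zero_div])
      norm_num
      exact ⟨hF2ne, hF3ne, hF4ne, hF5ne, hx0eq, y1eq, x2eq⟩
    | succ k ih =>
      obtain ⟨h2, h3, h4, h5, hxk, hyk, hxk2⟩ := ih
      have hyk3 : y (2*(k:ℤ)+3) = F (2*k+6) / F (2*k+5) := by
        have h := hy (2*k+2)
        rw [show ((2*k+2:ℕ):ℤ) = 2*(k:ℤ)+2 from by push_cast; ring] at h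
        simp only [show 2*(k:ℤ)+2+1 = 2*(k:ℤ)+3 from by ring,
          show 2*(k:ℤ)+2-2 = 2*(k:ℤ) from by ring,
          show 2*(k:ℤ)+2-1 = 2*(k:ℤ)+1 from by ring] at h
        rw [h, hxk, hyk, hxk2,
          step_alg a b c d (F (2*k+2)) (F (2*k+3)) (F (2*k+4)) (F (2*k+5)) h2 h3 h4 h5]
        have hr := hFrec (2*k+2)
        simp only [show 2*k+2+4 = 2*k+6 from by ring, show 2*k+2+3 = 2*k+5 from by ring,
          show 2*k+2+2 = 2*k+4 from by ring, show 2*k+2+1 = 2*k+3 from by ring] at hr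
        rw [hr]
      have h6 : F (2*k+6) ≠ 0 := by
        intro h0
        exact (hne (2*(k:ℤ)+3) (by omega)).2 (by rw [hyk3, h0, zero_div])
      have hxk4 : x (2*(k:ℤ)+4) = F (2*k+7) / F (2*k+6) := by
        have h := hx (2*k+3)
        rw [show ((2*k+3:ℕ):ℤ) = 2*(k:ℤ)+3 from by push_cast; ring] at h
        simp only [show 2*(k:ℤ)+3+1 = 2*(k:ℤ)+4 from by ring,
          show 2*(k:ℤ)+3-2 = 2*(k:ℤ)+1 from by ring,
          show 2*(k:ℤ)+3-1 = 2*(k:ℤ)+2 from by ring] at h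
        rw [h, hyk, hxk2, hyk3,
          step_alg a b c d (F (2*k+3)) (F (2*k+4)) (F (2*k+5)) (F (2*k+6)) h3 h4 h5 h6]
        have hr := hFrec (2*k+3)
        simp only [show 2*k+3+4 = 2*k+7 from by ring, show 2*k+3+3 = 2*k+6 from by ring,
          show 2*k+3+2 = 2*k+5 from by ring, show 2*k+3+1 = 2*k+4 from by ring] at hr
        rw [hr]
      have h7 : F (2*k+7) ≠ 0 := by
        intro h0
        exact (hne (2*(k:ℤ)+4) (by omega)).1 (by rw [hxk4, h0, zero_div])
      simp only [show 2*(k+1)+2 = 2*k+4 from by ring, show 2*(k+1)+3 = 2*k+5 from by ring,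
        show 2*(k+1)+4 = 2*k+6 from by ring, show 2*(k+1)+5 = 2*k+7 from by ring,
        show ((k+1:ℕ):ℤ) = (k:ℤ)+1 from by push_cast; ring,
        show 2*((k:ℤ)+1) = 2*(k:ℤ)+2 from by ring,
        show 2*((k:ℤ)+1)+1 = 2*(k:ℤ)+3 from by ring,
        show 2*((k:ℤ)+1)+2 = 2*(k:ℤ)+4 from by ring]
      exact ⟨h4, h5, h6, h7, hxk2, hyk3, hxk4⟩
  intro n
  rw [(main n).2.2.2.2.2.2]
  have k1 := auxF_eq_J a b c d (x (-2)) (y (-1) * x (-2)) (x 0 * y (-1) * x (-2)) J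
    hJ0 hJ1 hJ2 hJ3 hJ (2*n+2)
  have k2 := auxF_eq_J a b c d (x (-2)) (y (-1) * x (-2)) (x 0 * y (-1) * x (-2)) J
    hJ0 hJ1 hJ2 hJ3 hJ (2*n+1)
  rw [← hF] at k1 k2
  simp only [show 2*n+2+3 = 2*n+5 from by ring, show 2*n+2+1 = 2*n+3 from by ring,
    show 2*n+2+2 = 2*n+4 from by ring] at k1
  simp only [show 2*n+1+3 = 2*n+4 from by ring, show 2*n+1+1 = 2*n+2 from by ring,
    show 2*n+1+2 = 2*n+3 from by ring] at k2
  rw [k1, k2]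
  ring
end

section
/- Let a, b, c, d be real numbers with d ≠ 0 and let (J_n) be the fourth-order recurrence sequence with J_0 = J_1 = 0, J_2 = 1, J_3 = a. Let (x_n)_{n≥-2} be a real sequence with x_n ≠ 0 for all n and satisfying x_{n+1} = (a·x_{n-2}·x_{n-1}·x_n + b·x_{n-1}·x_{n-2} + c·x_{n-2} + d)/(x_{n-2}·x_{n-1}·x_n) for all n ≥ 0. Then for all n ≥ 0, x_{2n+1} = (d·J_{2n+2} + (c·J_{2n+2} + d·J_{2n+1})·x_{-2} + (J_{2n+4} - a·J_{2n+3})·x_{-1}·x_{-2} + J_{2n+3}·x_0·x_{-1}·x_{-2}) / (d·J_{2n+1} + (c·J_{2n+1} + d·J_{2n})·x_{-2} + (J_{2n+3} - a·J_{2n+2})·x_{-1}·x_{-2} + J_{2n+2}·x_0·x_{-1}·x_{-2}) and x_{2n+2} = (d·J_{2n+3} + (c·J_{2n+3} + d·J_{2n+2})·x_{-2} + (J_{2n+5} - a·J_{2n+4})·x_{-1}·x_{-2} + J_{2n+4}·x_0·x_{-1}·x_{-2}) / (d·J_{2n+2} + (c·J_{2n+2} + d·J_{2n+1})·x_{-2}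 + (J_{2n+4} - a·J_{2n+3})·x_{-1}·x_{-2} + J_{2n+3}·x_0·x_{-1}·x_{-2}). -/
set_option maxHeartbeats 1000000 in
noncomputable def Eseq (a b c d e0 e1 e2 e3 : ℝ) : ℕ → ℝ
  | 0 => e0
  | 1 => e1
  | 2 => e2
  | 3 => e3
  | (k+4) => a * Eseq a b c d e0 e1 e2 e3 (k+3) + b * Eseq a b c d e0 e1 e2 e3 (k+2)
      + c * Eseq a b c d e0 e1 e2 e3 (k+1) + d * Eseq a b c d e0 e1 e2 e3 k
lemma EseqD (a b c d : ℝ) (J : ℕ → ℝ)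
    (hJ0 : J 0 = 0) (hJ1 : J 1 = 0) (hJ2 : J 2 = 1) (hJ3 : J 3 = a)
    (hJ : ∀ n : ℕ, J (n + 4) = a * J (n + 3) + b * J (n + 2) + c * J (n + 1) + d * J n)
    (p q r : ℝ) :
    ∀ k : ℕ, Eseq a b c d 1 p q r (k+3) =
      d * J (k+1) + (c * J (k+1) + d * J k) * p + (J (k+3) - a * J (k+2)) * q + J (k+2) * r := by
  set D : ℕ → ℝ := fun k => d * J (k+1) + (c * J (k+1) + d * J k) * p
      + (J (k+3) - a * J (k+2)) * q + J (k+2) * r with hD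
  have quad : ∀ k, Eseq a b c d 1 p q r (k+3) = D k ∧ Eseq a b c d 1 p q r (k+4) = D (k+1)
      ∧ Eseq a b c d 1 p q r (k+5) = D (k+2) ∧ Eseq a b c d 1 p q r (k+6) = D (k+3) := by
    intro k
    induction k with
    | zero =>
      have h4 := hJ 0; have h5 := hJ 1; have h6 := hJ 2
      norm_num at h4 h5 h6
      refine ⟨?_, ?_, ?_, ?_⟩ <;> simp [Eseq, hD, hJ0, hJ1, hJ2, hJ3, h4, h5, h6] <;> ring
    | succ k ih =>
      obtain ⟨i0, i1, i2, i3⟩ := ih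
      refine ⟨i1, i2, i3, ?_⟩
      have : Eseq a b c d 1 p q r (k+7) = a * Eseq a b c d 1 p q r (k+6)
          + b * Eseq a b c d 1 p q r (k+5) + c * Eseq a b c d 1 p q r (k+4)
          + d * Eseq a b c d 1 p q r (k+3) := by
        show Eseq a b c d 1 p q r (k+3+4) = _
        rw [Eseq]
      rw [show k+1+6 = k+7 from rfl, this, i0, i1, i2, i3, hD]
      have h4 := hJ k; have h5 := hJ (k+1); have h6 := hJ (k+2); have h7 := hJ (k+3)
      linear_combination (-(d*p)) * h4 + (-(d + c*p)) * h5 + (-(r - a*q)) * h6 + (-q) * h7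
  exact fun k => (quad k).1

set_option maxHeartbeats 1000000 in
theorem mainB (a b c d : ℝ)
    (x : ℤ → ℝ)
    (hx0 : ∀ n : ℤ, -2 ≤ n → x n ≠ 0)
    (hx : ∀ n : ℕ, x ((n : ℤ) + 1) =
      (a * x ((n : ℤ) - 2) * x ((n : ℤ) - 1) * x n + b * x ((n : ℤ) - 1) * x ((n : ℤ) - 2)
        + c * x ((n : ℤ) - 2) + d) / (x ((n : ℤ) - 2) * x ((n : ℤ) - 1) * x n)) :
    ∀ m : ℕ, (x ((m:ℤ) - 2) = Eseq a b c d 1 (x (-2)) (x (-1) * x (-2)) (x 0 * x (-1) * x (-2)) (m+1)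
          / Eseq a b c d 1 (x (-2)) (x (-1) * x (-2)) (x 0 * x (-1) * x (-2)) m)
      ∧ Eseq a b c d 1 (x (-2)) (x (-1) * x (-2)) (x 0 * x (-1) * x (-2)) (m+1) ≠ 0 := by
  set E := Eseq a b c d 1 (x (-2)) (x (-1) * x (-2)) (x 0 * x (-1) * x (-2)) with hE
  have e0 : E 0 = 1 := rfl
  have e1 : E 1 = x (-2) := rfl
  have e2 : E 2 = x (-1) * x (-2) := rfl
  have e3 : E 3 = x 0 * x (-1) * x (-2) := rfl
  have hrec : ∀ k : ℕ, E (k+4) = a * E (k+3) + b * E (k+2) + c * E (k+1) + d * E k := by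
    intro k; rw [hE]; rw [Eseq]
  have hm2 : x (-2) ≠ 0 := hx0 (-2) (by norm_num)
  have hm1 : x (-1) ≠ 0 := hx0 (-1) (by norm_num)
  have key : ∀ m : ℕ,
      ((x ((m:ℤ) - 2) = E (m+1) / E m ∧ E (m+1) ≠ 0)
      ∧ (x ((m:ℤ) - 1) = E (m+2) / E (m+1) ∧ E (m+2) ≠ 0)
      ∧ (x (m:ℤ) = E (m+3) / E (m+2) ∧ E (m+3) ≠ 0)) := by
    intro m
    induction m with
    | zero =>
      have h0 : x (0:ℤ) ≠ 0 := hx0 0 (by norm_num)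
      refine ⟨⟨?_, ?_⟩, ⟨?_, ?_⟩, ⟨?_, ?_⟩⟩
      · norm_num [e0, e1]
      · rw [e1]; exact hm2
      · rw [e1, e2]; norm_num; field_simp
      · rw [e2]; exact mul_ne_zero hm1 hm2
      · rw [e2, e3]; norm_num; field_simp
      · rw [e3]; exact mul_ne_zero (mul_ne_zero h0 hm1) hm2
    | succ m ih =>
      obtain ⟨⟨p1, n1⟩, ⟨p2, n2⟩, ⟨p3, n3⟩⟩ := ih
      have n0 : E m ≠ 0 := by
        cases m with
        | zero => rw [e0]; norm_num
        | succ m' =>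
          -- E (m'+1) ≠ 0 : could get from previous, but easier: from p1: x(m-2)=E(m+1)/E m nonzero
          by_contra h
          rw [h, div_zero] at p1
          exact hx0 _ (by push_cast; omega) p1
      have hxm : x (m:ℤ) ≠ 0 := hx0 _ (by omega)
      have goal3 : x ((m:ℤ) + 1) = E (m+4) / E (m+3) := by
        rw [hx m, p1, p2, p3, hrec m]
        have hEm := n0
        field_simp
      refine ⟨⟨?_, n2⟩, ⟨?_, n3⟩, ⟨?_, ?_⟩⟩
      · show x (((m+1 : ℕ):ℤ) - 2) = _
        push_cast
        rw [show (m:ℤ) + 1 - 2 = (m:ℤ) - 1 by ring]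
        exact p2
      · show x (((m+1 : ℕ):ℤ) - 1) = _
        push_cast
        rw [show (m:ℤ) + 1 - 1 = (m:ℤ) by ring]
        exact p3
      · show x (((m+1 : ℕ):ℤ)) = _
        push_cast
        exact goal3
      · by_contra h
        rw [show m+1+3 = m+4 from rfl] at h
        rw [h, zero_div] at goal3
        exact hx0 _ (by omega) goal3
  intro m
  exact ⟨(key m).1.1, (key m).1.2⟩

set_option maxHeartbeats 1000000 in
theorem stmt_10 (a b c d : ℝ) (hd : d ≠ 0)
    (J : ℕ → ℝ)
    (hJ0 : J 0 = 0) (hJ1 : J 1 = 0) (hJ2 : J 2 = 1) (hJ3 : J 3 = a)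
    (hJ : ∀ n : ℕ, J (n + 4) = a * J (n + 3) + b * J (n + 2) + c * J (n + 1) + d * J n)
    (x : ℤ → ℝ)
    (hx0 : ∀ n : ℤ, -2 ≤ n → x n ≠ 0)
    (hx : ∀ n : ℕ, x ((n : ℤ) + 1) =
      (a * x ((n : ℤ) - 2) * x ((n : ℤ) - 1) * x n + b * x ((n : ℤ) - 1) * x ((n : ℤ) - 2)
        + c * x ((n : ℤ) - 2) + d) / (x ((n : ℤ) - 2) * x ((n : ℤ) - 1) * x n)) :
    ∀ n : ℕ,
      x (2 * (n : ℤ) + 1) =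
        (d * J (2 * n + 2) + (c * J (2 * n + 2) + d * J (2 * n + 1)) * x (-2)
          + (J (2 * n + 4) - a * J (2 * n + 3)) * x (-1) * x (-2)
          + J (2 * n + 3) * x 0 * x (-1) * x (-2))
        / (d * J (2 * n + 1) + (c * J (2 * n + 1) + d * J (2 * n)) * x (-2)
          + (J (2 * n + 3) - a * J (2 * n + 2)) * x (-1) * x (-2)
          + J (2 * n + 2) * x 0 * x (-1) * x (-2))
      ∧ x (2 * (n : ℤ) + 2) =
        (d * J (2 * n + 3) + (c * J (2 * n + 3) + d * J (2 * n + 2)) * x (-2)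
          + (J (2 * n + 5) - a * J (2 * n + 4)) * x (-1) * x (-2)
          + J (2 * n + 4) * x 0 * x (-1) * x (-2))
        / (d * J (2 * n + 2) + (c * J (2 * n + 2) + d * J (2 * n + 1)) * x (-2)
          + (J (2 * n + 4) - a * J (2 * n + 3)) * x (-1) * x (-2)
          + J (2 * n + 3) * x 0 * x (-1) * x (-2)) := by
  intro n
  have hB := mainB a b c d x hx0 hx
  have hD := EseqD a b c d J hJ0 hJ1 hJ2 hJ3 hJ (x (-2)) (x (-1) * x (-2)) (x 0 * x (-1) * x (-2))
  constructor
  · have h1 := (hB (2*n+3)).1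
    rw [show ((((2*n+3 : ℕ)):ℤ) - 2) = 2 * (n:ℤ) + 1 by push_cast; ring] at h1
    rw [h1, show 2*n+3+1 = (2*n+1)+3 from rfl, show 2*n+3 = (2*n)+3 from rfl,
      hD (2*n+1), hD (2*n)]
    ring_nf
  · have h2 := (hB (2*n+4)).1
    rw [show ((((2*n+4 : ℕ)):ℤ) - 2) = 2 * (n:ℤ) + 2 by push_cast; ring] at h2
    rw [h2, show 2*n+4+1 = (2*n+2)+3 from rfl, show 2*n+4 = (2*n+1)+3 from rfl,
      hD (2*n+2), hD (2*n+1)]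
    ring_nf
end

section
/- Let (T_n) be the Tetranacci sequence: T_{n+4} = T_{n+3} + T_{n+2} + T_{n+1} + T_n with T_0 = T_1 = 0, T_2 = 1, T_3 = 1. Let (x_n)_{n≥-2} be a real sequence with x_n ≠ 0 for all n satisfying x_{n+1} = (x_{n-2}·x_{n-1}·x_n + x_{n-1}·x_{n-2} + x_{n-2} + 1)/(x_{n-2}·x_{n-1}·x_n) for all n ≥ 0. Then for all n ≥ 0, x_{2n+1} = (T_{2n+2} + (T_{2n+2} + T_{2n+1})·x_{-2} + (T_{2n+4} - T_{2n+3})·x_{-1}·x_{-2} + T_{2n+3}·x_0·x_{-1}·x_{-2}) / (T_{2n+1} + (T_{2n+1} + T_{2n})·x_{-2} + (T_{2n+3} - T_{2n+2})·x_{-1}·x_{-2} + T_{2n+2}·x_0·x_{-1}·x_{-2}). -/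
/-!
Put `y k = x (k - 2)`. The recurrence says exactly
`y (k + 3) = 1 + 1 / y (k + 2) + 1 / (y (k + 2) y (k + 1)) + 1 / (y (k + 2) y (k + 1) y k)`,
so the partial products `P k = y 0 ⋯ y (k - 1)` satisfy the Tetranacci recurrence. Hence `P` is
the combination of shifted Tetranacci numbers fixed by its initial values
`1, x (-2), x (-2) x (-1), x (-2) x (-1) x 0`, and `x (2n + 1) = P (2n + 4) / P (2n + 3)`.
-/

open Finset

def IsTetranacci {R : Type*} [Add R] (u : ℕ → R) : Prop :=
  ∀ n, u (n + 4) = u (n + 3) + u (n + 2) + u (n + 1) + u n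

theorem IsTetranacci.add_three_eq {R : Type*} [CommRing R] {T u : ℕ → R}
    (hu : IsTetranacci u) (hT : IsTetranacci T)
    (hT0 : T 0 = 0) (hT1 : T 1 = 0) (hT2 : T 2 = 1) (hT3 : T 3 = 1) (k : ℕ) :
    u (k + 3) = T (k + 1) * u 0 + (T (k + 1) + T k) * u 1
      + (T (k + 3) - T (k + 2)) * u 2 + T (k + 2) * u 3 := by
  have hT4 : T 4 = 2 := by rw [hT 0, hT0, hT1, hT2, hT3]; norm_num
  have hT5 : T 5 = 4 := by rw [hT 1, hT4, hT1, hT2, hT3]; norm_num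
  have hT6 : T 6 = 8 := by rw [hT 2, hT5, hT4, hT2, hT3]; norm_num
  induction k using Nat.strong_induction_on with
  | _ k ih =>
    match k with
    | 0 => simp [hT0, hT1, hT2, hT3]
    | 1 => norm_num [hu 0, hT1, hT2, hT3, hT4]; ring
    | 2 => norm_num [hu 1, hu 0, hT2, hT3, hT4, hT5]; ring
    | 3 => norm_num [hu 2, hu 1, hu 0, hT3, hT4, hT5, hT6]; ring
    | k + 4 =>
      rw [hu (k + 3), ih k (by omega), ih (k + 1) (by omega), ih (k + 2) (by omega),
        ih (k + 3) (by omega)]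
      linear_combination (-(u 0 + u 1)) * hT (k + 1) - u 1 * hT k
        - u 2 * (hT (k + 3) - hT (k + 2)) - u 3 * hT (k + 2)

theorem isTetranacci_prod_range {K : Type*} [Field K] {y : ℕ → K} (hy0 : ∀ n, y n ≠ 0)
    (hy : ∀ n, y (n + 3) = (y n * y (n + 1) * y (n + 2) + y (n + 1) * y n + y n + 1)
      / (y n * y (n + 1) * y (n + 2))) :
    IsTetranacci fun n => ∏ i ∈ range n, y i := by
  intro n
  have := hy0 n; have := hy0 (n + 1); have := hy0 (n + 2)
  simp only [prod_range_succ, hy n]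
  field_simp

theorem stmt_11 (T : ℕ → ℝ)
    (hT0 : T 0 = 0) (hT1 : T 1 = 0) (hT2 : T 2 = 1) (hT3 : T 3 = 1)
    (hT : ∀ n : ℕ, T (n + 4) = T (n + 3) + T (n + 2) + T (n + 1) + T n)
    (x : ℤ → ℝ)
    (hx0 : ∀ n : ℤ, -2 ≤ n → x n ≠ 0)
    (hx : ∀ n : ℕ, x ((n : ℤ) + 1) =
      (x ((n : ℤ) - 2) * x ((n : ℤ) - 1) * x n + x ((n : ℤ) - 1) * x ((n : ℤ) - 2)
        + x ((n : ℤ) - 2) + 1) / (x ((n : ℤ) - 2) * x ((n : ℤ) - 1) * x n)) :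
    ∀ n : ℕ, x (2 * (n : ℤ) + 1) =
      (T (2 * n + 2) + (T (2 * n + 2) + T (2 * n + 1)) * x (-2)
        + (T (2 * n + 4) - T (2 * n + 3)) * x (-1) * x (-2)
        + T (2 * n + 3) * x 0 * x (-1) * x (-2))
      / (T (2 * n + 1) + (T (2 * n + 1) + T (2 * n)) * x (-2)
        + (T (2 * n + 3) - T (2 * n + 2)) * x (-1) * x (-2)
        + T (2 * n + 2) * x 0 * x (-1) * x (-2)) := by
  intro n
  obtain ⟨y, hy_def⟩ : ∃ y : ℕ → ℝ, ∀ k : ℕ, y k = x (k - 2) := ⟨_, fun _ => rfl⟩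
  have hy0 (k : ℕ) : y k ≠ 0 := hy_def k ▸ hx0 _ (by omega)
  have hy (k : ℕ) : y (k + 3) = (y k * y (k + 1) * y (k + 2) + y (k + 1) * y k + y k + 1)
      / (y k * y (k + 1) * y (k + 2)) := by
    simp only [hy_def]
    push_cast
    rw [show (k : ℤ) + 3 - 2 = k + 1 by ring, show (k : ℤ) + 1 - 2 = k - 1 by ring,
      show (k : ℤ) + 2 - 2 = k by ring]
    exact hx k
  have hP (k : ℕ) : ∏ i ∈ range (k + 3), y i = T (k + 1) + (T (k + 1) + T k) * x (-2)
      + (T (k + 3) - T (k + 2)) * x (-1) * x (-2) + T (k + 2) * x 0 * x (-1) * x (-2) := by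
    rw [(isTetranacci_prod_range hy0 hy).add_three_eq hT hT0 hT1 hT2 hT3]
    simp [prod_range_succ, hy_def]
    ring
  have hxy : x (2 * n + 1) = y (2 * n + 3) := by rw [hy_def]; push_cast; ring_nf
  have hPne : ∏ i ∈ range (2 * n + 3), y i ≠ 0 := prod_ne_zero_iff.2 fun i _ => hy0 i
  rw [hxy, ← mul_div_cancel_left₀ (y (2 * n + 3)) hPne, ← prod_range_succ, hP (2 * n + 1),
    hP (2 * n)]
end

section
/- Let a, b, c, d be real numbers, and suppose the characteristic polynomial λ⁴ - aλ³ - bλ² - cλ - d has a double real root α=β and two distinct simple complex conjugate roots γ, γ̄ (all distinct from α). Let (J_n) satisfy J_{n+4} = a·J_{n+3} + b·J_{n+2} + c·J_{n+1} + d·J_n with J_0 = J_1 = 0, J_2 = 1, J_3 = a. Then for all n ≥ 0, J_n = ((γ̄γ - α²)/((γ̄-α)²(γ-α)²) + n/((γ̄-α)(γ-α)))·αⁿ - γ·γⁿ/((γ̄-γ)(γ-α)²) + γ̄·γ̄ⁿ/((γ̄-γ)(γ̄-α)²). -/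
/-!
Each of `αⁿ`, `n αⁿ`, `γⁿ` and `γ̄ⁿ` solves the recurrence: the geometric ones because their
ratios are roots of the characteristic polynomial, and `n αⁿ` because the double root `α` is
also a root of its derivative. The right-hand side is a linear combination of these, hence a
solution, and a solution of a recurrence of order four is determined by its first four values,
which are checked directly using `a = 2α + γ + γ̄`.
-/

open Polynomial ComplexConjugate

namespace LinearRecurrence

variable {R : Type*} [CommRing R] (E : LinearRecurrence R)

theorem eval_charPoly (q : R) :
    E.charPoly.eval q = q ^ E.order - ∑ i, E.coeffs i * q ^ (i : ℕ) := by
  simp [charPoly, eval_finsetSum]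

theorem mul_eval_derivative_charPoly (q : R) :
    q * (derivative E.charPoly).eval q =
      E.order * q ^ E.order - ∑ i, E.coeffs i * (i : ℕ) * q ^ (i : ℕ) := by
  have key : ∀ (m : ℕ) (c : R), q * (derivative (monomial m c)).eval q = c * m * q ^ m := by
    rintro (_ | m) c
    · simp
    · simp only [derivative_monomial, eval_monomial]; push_cast; ring
  simp only [charPoly, derivative_sub, derivative_sum, eval_sub, eval_finsetSum, mul_sub,
    Finset.mul_sum, key]
  ring

theorem isSolution_natCast_mul_geom {q : R} (h₀ : E.charPoly.IsRoot q)
    (h₁ : (derivative E.charPoly).IsRoot q) : E.IsSolution fun n ↦ n * q ^ n := by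
  have hgeom : ∑ i, E.coeffs i * q ^ (i : ℕ) = q ^ E.order := by
    rw [eq_comm, ← sub_eq_zero, ← E.eval_charPoly, h₀.eq_zero]
  have hder : ∑ i, E.coeffs i * (i : ℕ) * q ^ (i : ℕ) = E.order * q ^ E.order := by
    rw [eq_comm, ← sub_eq_zero, ← E.mul_eval_derivative_charPoly, h₁.eq_zero, mul_zero]
  intro n
  calc ((n + E.order : ℕ) : R) * q ^ (n + E.order)
      = q ^ n * (n * q ^ E.order + E.order * q ^ E.order) := by push_cast; ring
    _ = q ^ n * (n * ∑ i, E.coeffs i * q ^ (i : ℕ) +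
          ∑ i, E.coeffs i * (i : ℕ) * q ^ (i : ℕ)) := by
      rw [hgeom, hder]
    _ = ∑ i, E.coeffs i * ((n + i : ℕ) * q ^ (n + i)) := by
      rw [Finset.mul_sum, ← Finset.sum_add_distrib, Finset.mul_sum]
      refine Finset.sum_congr rfl fun i _ ↦ ?_
      push_cast; ring

end LinearRecurrence

variable {K : Type*} [Field K]

def closedFormDoubleRoot (α γ δ : K) (n : ℕ) : K :=
  ((δ * γ - α ^ 2) / ((δ - α) ^ 2 * (γ - α) ^ 2) + n / ((δ - α) * (γ - α))) * α ^ n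
    - γ * γ ^ n / ((δ - γ) * (γ - α) ^ 2) + δ * δ ^ n / ((δ - γ) * (δ - α) ^ 2)

theorem closedFormDoubleRoot_initial {α γ δ : K} (hγ : γ ≠ α) (hδ : δ ≠ α) (hγδ : δ ≠ γ) :
    closedFormDoubleRoot α γ δ 0 = 0 ∧ closedFormDoubleRoot α γ δ 1 = 0 ∧
      closedFormDoubleRoot α γ δ 2 = 1 ∧ closedFormDoubleRoot α γ δ 3 = 2 * α + γ + δ := by
  have := sub_ne_zero.2 hγ
  have := sub_ne_zero.2 hδ
  have := sub_ne_zero.2 hγδ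
  refine ⟨?_, ?_, ?_, ?_⟩ <;> simp only [closedFormDoubleRoot] <;> field_simp <;> ring

namespace LinearRecurrence

variable (E : LinearRecurrence K) {α γ δ : K}

theorem isSolution_closedFormDoubleRoot
    (hE : E.charPoly = (X - C α) ^ 2 * (X - C γ) * (X - C δ)) :
    E.IsSolution (closedFormDoubleRoot α γ δ) := by
  have geom : ∀ q, E.charPoly.IsRoot q → (fun n ↦ q ^ n) ∈ E.solSpace := fun q hq ↦
    (E.is_sol_iff_mem_solSpace _).1 ((E.geom_sol_iff_root_charPoly q).2 hq)
  have natCast_mul_geom : (fun n : ℕ ↦ n * α ^ n) ∈ E.solSpace := by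
    rw [← is_sol_iff_mem_solSpace]
    exact E.isSolution_natCast_mul_geom (by simp [hE]) (by simp [hE, derivative_mul, derivative_sq])
  have hlin : closedFormDoubleRoot α γ δ =
      ((δ * γ - α ^ 2) / ((δ - α) ^ 2 * (γ - α) ^ 2)) • (fun n ↦ α ^ n)
        + (1 / ((δ - α) * (γ - α))) • (fun n : ℕ ↦ n * α ^ n)
        - (γ / ((δ - γ) * (γ - α) ^ 2)) • (fun n ↦ γ ^ n)
        + (δ / ((δ - γ) * (δ - α) ^ 2)) • (fun n ↦ δ ^ n) := by
    funext n
    simp only [closedFormDoubleRoot, Pi.add_apply, Pi.sub_apply, Pi.smul_apply, smul_eq_mul]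
    ring
  rw [is_sol_iff_mem_solSpace, hlin]
  refine add_mem (sub_mem (add_mem ?_ ?_) ?_) ?_ <;> refine Submodule.smul_mem _ _ ?_
  · exact geom α (by simp [hE])
  · exact natCast_mul_geom
  · exact geom γ (by simp [hE])
  · exact geom δ (by simp [hE])

theorem order_eq_four_of_charPoly_eq
    (hE : E.charPoly = (X - C α) ^ 2 * (X - C γ) * (X - C δ)) : E.order = 4 := by
  have hdeg : ((X - C α) ^ 2 * (X - C γ) * (X - C δ)).degree = 4 := by compute_degree!
  have h := E.charPoly_degree_eq_order
  rw [hE, hdeg] at h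
  exact_mod_cast h.symm

theorem eq_closedFormDoubleRoot (hγ : γ ≠ α) (hδ : δ ≠ α) (hγδ : δ ≠ γ)
    (hE : E.charPoly = (X - C α) ^ 2 * (X - C γ) * (X - C δ)) {u : ℕ → K} (hu : E.IsSolution u)
    (h0 : u 0 = 0) (h1 : u 1 = 0) (h2 : u 2 = 1) (h3 : u 3 = 2 * α + γ + δ) :
    u = closedFormDoubleRoot α γ δ := by
  obtain ⟨c0, c1, c2, c3⟩ := closedFormDoubleRoot_initial hγ hδ hγδ
  rw [E.eq_iff_eqOn_range_order _ _ hu (E.isSolution_closedFormDoubleRoot hE),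
    E.order_eq_four_of_charPoly_eq hE]
  intro n hn
  simp only [Finset.coe_range, Set.mem_Iio] at hn
  interval_cases n <;> simp_all

end LinearRecurrence

-- Finite differences of the identity at `0, ±1, 2` isolate the coefficient of `z ^ 3`.
theorem quartic_coeff_eq_sum_roots [CharZero K] {a b c d α γ δ : K}
    (h : ∀ z, z ^ 4 - a * z ^ 3 - b * z ^ 2 - c * z - d = (z - α) ^ 2 * (z - γ) * (z - δ)) :
    a = 2 * α + γ + δ := by
  linear_combination (-1/2) * h 0 + (1/2) * h 1 + (1/6) * h (-1) - (1/6) * h 2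

theorem stmt_13 (a b c d : ℝ) (α : ℝ) (γ : ℂ) (hγ : γ.im ≠ 0)
    (hfac : ∀ z : ℂ, z ^ 4 - (a : ℂ) * z ^ 3 - (b : ℂ) * z ^ 2 - (c : ℂ) * z - (d : ℂ) =
      (z - (α : ℂ)) ^ 2 * (z - γ) * (z - (starRingEnd ℂ) γ))
    (J : ℕ → ℝ)
    (hJ0 : J 0 = 0) (hJ1 : J 1 = 0) (hJ2 : J 2 = 1) (hJ3 : J 3 = a)
    (hJ : ∀ n : ℕ, J (n + 4) = a * J (n + 3) + b * J (n + 2) + c * J (n + 1) + d * J n) :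
    ∀ n : ℕ, (J n : ℂ) =
      (((starRingEnd ℂ) γ * γ - (α : ℂ) ^ 2) / (((starRingEnd ℂ) γ - α) ^ 2 * (γ - α) ^ 2)
        + (n : ℂ) / (((starRingEnd ℂ) γ - α) * (γ - α))) * (α : ℂ) ^ n
      - γ * γ ^ n / (((starRingEnd ℂ) γ - γ) * (γ - α) ^ 2)
      + (starRingEnd ℂ) γ * ((starRingEnd ℂ) γ) ^ n
        / (((starRingEnd ℂ) γ - γ) * ((starRingEnd ℂ) γ - α) ^ 2) := by
  let E : LinearRecurrence ℂ := ⟨4, ![d, c, b, a]⟩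
  have hE : E.charPoly = (X - C (α : ℂ)) ^ 2 * (X - C γ) * (X - C (conj γ)) := by
    refine Polynomial.funext fun z ↦ ?_
    simp only [E, LinearRecurrence.eval_charPoly, Fin.sum_univ_four, Matrix.cons_val_zero,
      Matrix.cons_val_one, Matrix.cons_val, Fin.coe_ofNat_eq_mod, Nat.reduceMod, eval_mul, eval_pow,
      eval_sub, eval_X, eval_C]
    linear_combination hfac z
  have hJE : E.IsSolution fun n ↦ (J n : ℂ) := fun n ↦ by
    simp only [E, hJ n, Fin.sum_univ_four, Matrix.cons_val_zero, Matrix.cons_val_one,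
      Matrix.cons_val, Fin.coe_ofNat_eq_mod, Nat.reduceMod, add_zero]
    push_cast
    ring
  have hγα : γ ≠ α := fun h ↦ hγ (by simpa using congrArg Complex.im h)
  have hγ'α : conj γ ≠ α := fun h ↦ hγ (by simpa using congrArg Complex.im h)
  have hγ'γ : conj γ ≠ γ := fun h ↦ hγ (by simpa using (Complex.conj_eq_iff_im.1 h))
  have h3 : (J 3 : ℂ) = 2 * α + γ + conj γ := by
    rw [hJ3]; exact quartic_coeff_eq_sum_roots hfac
  intro n
  exact congrFun (E.eq_closedFormDoubleRoot hγα hγ'α hγ'γ hE hJE (by simp [hJ0]) (by simp [hJ1])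
    (by simp [hJ2]) h3) n
end

section
/- Let a, b be real numbers and suppose the polynomial λ⁴ - aλ³ - bλ² - cλ - d factors as (λ-α)²(λ-ᾱ)² for a nonreal complex number α (so a = 2(α+ᾱ), etc.). Let (J_n) satisfy J_{n+4} = aJ_{n+3} + bJ_{n+2} + cJ_{n+1} + dJ_n with J_0 = J_1 = 0, J_2 = 1, J_3 = a. Then for all n ≥ 0, J_n = ((ᾱ+α)/(ᾱ-α)³ + n/(ᾱ-α)²)·αⁿ + (-(ᾱ+α)/(ᾱ-α)³ + n/(ᾱ-α)²)·ᾱⁿ. -/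
set_option maxHeartbeats 1000000


theorem stmt_14 (a b c d : ℝ) (α : ℂ) (hα : α.im ≠ 0)
    (hfac : ∀ z : ℂ, z ^ 4 - (a : ℂ) * z ^ 3 - (b : ℂ) * z ^ 2 - (c : ℂ) * z - (d : ℂ) =
      (z - α) ^ 2 * (z - (starRingEnd ℂ) α) ^ 2)
    (J : ℕ → ℝ)
    (hJ0 : J 0 = 0) (hJ1 : J 1 = 0) (hJ2 : J 2 = 1) (hJ3 : J 3 = a)
    (hJ : ∀ n : ℕ, J (n + 4) = a * J (n + 3) + b * J (n + 2) + c * J (n + 1) + d * J n) :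
    ∀ n : ℕ, (J n : ℂ) =
      (((starRingEnd ℂ) α + α) / ((starRingEnd ℂ) α - α) ^ 3
        + (n : ℂ) / ((starRingEnd ℂ) α - α) ^ 2) * α ^ n
      + (-((starRingEnd ℂ) α + α) / ((starRingEnd ℂ) α - α) ^ 3
        + (n : ℂ) / ((starRingEnd ℂ) α - α) ^ 2) * ((starRingEnd ℂ) α) ^ n := by
  set β := (starRingEnd ℂ) α with hβdef
  have hne : β - α ≠ 0 := by
    rw [sub_ne_zero, hβdef]
    intro h
    exact hα (Complex.conj_eq_iff_im.mp h)
  have h0 := hfac 0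
  have h1 := hfac 1
  have hm1 := hfac (-1)
  have h2 := hfac 2
  have hm2 := hfac (-2)
  have ha : (a : ℂ) = 2 * (α + β) := by
    linear_combination (-1/12 : ℂ) * h2 + (1/12 : ℂ) * hm2 + (1/6 : ℂ) * h1
      - (1/6 : ℂ) * hm1
  have hc : (c : ℂ) = 2 * α * β * (α + β) := by
    linear_combination (1/12 : ℂ) * h2 - (1/12 : ℂ) * hm2 - (2/3 : ℂ) * h1
      + (2/3 : ℂ) * hm1
  have hd : (d : ℂ) = -(α * β) ^ 2 := by
    linear_combination -h0
  have hb : (b : ℂ) = -(α ^ 2 + 4 * α * β + β ^ 2) := by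
    linear_combination (-1/2 : ℂ) * h1 + (-1/2 : ℂ) * hm1 + h0
  have key : ∀ n : ℕ, ∀ m : ℕ, m ≤ n →
      (J m : ℂ) = ((β + α) / (β - α) ^ 3 + (m : ℂ) / (β - α) ^ 2) * α ^ m
        + (-(β + α) / (β - α) ^ 3 + (m : ℂ) / (β - α) ^ 2) * β ^ m := by
    intro n
    induction n using Nat.strong_induction_on with
    | _ n ih =>
      intro m hm
      match m with
      | 0 => rw [hJ0]; push_cast; field_simp; ring
      | 1 => rw [hJ1]; push_cast; field_simp; ring
      | 2 => rw [hJ2]; push_cast; field_simp; ring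
      | 3 => rw [hJ3]; push_cast [ha]; field_simp; ring
      | (k + 4) =>
        have e0 : (J k : ℂ) = _ := ih (n - 1) (by omega) k (by omega)
        have e1 : (J (k+1) : ℂ) = _ := ih (n - 1) (by omega) (k+1) (by omega)
        have e2 : (J (k+2) : ℂ) = _ := ih (n - 1) (by omega) (k+2) (by omega)
        have e3 : (J (k+3) : ℂ) = _ := ih (n - 1) (by omega) (k+3) (by omega)
        rw [hJ k]
        push_cast [e0, e1, e2, e3, ha, hb, hc, hd]
        field_simp
        ring
  intro n
  exact key n n le_rfl
end

section
/- Let ω be complex roots of λ⁴ - λ³ - λ² - λ - 1 = 0. Then this polynomial has exactly two real roots α > 0 and β < 0, with 1.9 < α < 2 and -1 < β < 0, and its two remaining roots are complex conjugates of each other with modulus less than 1. -/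
/-!
Two sign changes of `p(x) = x⁴ - x³ - x² - x - 1`, on `[1.9, 2]` and `[-1, -0.6]`, give real roots
`α` and `β`. Dividing `p` by `(x - α)(x - β)` leaves a monic quadratic `x² + b x + c`; its constant
term is `c = -1 / (α β)`, so `1/2 < c < 1` from `-2 < α β < -1`, while `b = α + β - 1` is small.
Hence the quadratic has negative discriminant: it contributes no further real root and a pair of
conjugate complex roots of squared modulus `c < 1`.
-/

def tetranacciPoly {R : Type*} [Ring R] (x : R) : R := x ^ 4 - x ^ 3 - x ^ 2 - x - 1

@[simp, norm_cast]
theorem Complex.ofReal_tetranacciPoly (x : ℝ) :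
    ((tetranacciPoly x : ℝ) : ℂ) = tetranacciPoly (x : ℂ) := by
  simp [tetranacciPoly]

theorem tetranacciPoly_eq_mul_of_isRoot {K : Type*} [CommRing K] [NoZeroDivisors K] {α β : K}
    (hα : tetranacciPoly α = 0) (hβ : tetranacciPoly β = 0) (hαβ : α ≠ β) (z : K) :
    tetranacciPoly z = (z - α) * (z - β) *
      (z ^ 2 + (α + β - 1) * z + ((α + β) ^ 2 - (α + β) - α * β - 1)) := by
  unfold tetranacciPoly at *
  -- `(p α - p β) / (α - β)`, the `z`-coefficient of the remainder of `p` modulo `(z - α) (z - β)`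
  have hlin : (α + β) ^ 3 - (α + β) ^ 2 - 2 * (α * β) * (α + β) - (α + β) + α * β - 1 = 0 := by
    refine (mul_eq_zero.mp ?_).resolve_right (sub_ne_zero.mpr hαβ)
    linear_combination hα - hβ
  linear_combination hα - (α - z) * hlin

theorem exists_pos_root_tetranacciPoly : ∃ α ∈ Set.Ioo (1.9 : ℝ) 2, tetranacciPoly α = 0 := by
  have hcont : ContinuousOn (tetranacciPoly (R := ℝ)) (Set.Icc 1.9 2) := by
    unfold tetranacciPoly; fun_prop
  exact intermediate_value_Ioo (by norm_num) hcont (by norm_num [tetranacciPoly])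

-- The upper end `-0.6` (rather than `0`) is what forces `α β < -1` below.
theorem exists_neg_root_tetranacciPoly : ∃ β ∈ Set.Ioo (-1 : ℝ) (-0.6), tetranacciPoly β = 0 := by
  have hcont : ContinuousOn (tetranacciPoly (R := ℝ)) (Set.Icc (-1) (-0.6)) := by
    unfold tetranacciPoly; fun_prop
  exact intermediate_value_Ioo' (by norm_num) hcont (by norm_num [tetranacciPoly])

theorem quadratic_pos_of_discrim_neg {b c : ℝ} (h : b ^ 2 < 4 * c) (x : ℝ) :
    0 < x ^ 2 + b * x + c := by
  nlinarith [sq_nonneg (2 * x + b)]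

theorem exists_conj_roots_of_discrim_neg {b c : ℝ} (h : b ^ 2 < 4 * c) :
    ∃ γ : ℂ, γ.im ≠ 0 ∧ ‖γ‖ ^ 2 = c ∧
      ∀ z : ℂ, z ^ 2 + b * z + c = (z - γ) * (z - (starRingEnd ℂ) γ) := by
  set t := √(4 * c - b ^ 2)
  have ht : t ^ 2 = 4 * c - b ^ 2 := Real.sq_sqrt (by linarith)
  have htpos : 0 < t := Real.sqrt_pos.mpr (by linarith)
  have hnormSq : Complex.normSq ⟨-b / 2, t / 2⟩ = c := by
    rw [Complex.normSq_mk]; linear_combination ht / 4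
  refine ⟨⟨-b / 2, t / 2⟩, by simpa using htpos.ne', by rw [Complex.sq_norm, hnormSq], fun z => ?_⟩
  have hsum : (⟨-b / 2, t / 2⟩ : ℂ) + (starRingEnd ℂ) ⟨-b / 2, t / 2⟩ = -b := by
    rw [Complex.add_conj]; push_cast; ring
  have hprod : (⟨-b / 2, t / 2⟩ : ℂ) * (starRingEnd ℂ) ⟨-b / 2, t / 2⟩ = c := by
    rw [Complex.mul_conj, hnormSq]
  linear_combination z * hsum - hprod

theorem stmt_18 : ∃ α β : ℝ,
    0 < α ∧ 1.9 < α ∧ α < 2 ∧ -1 < β ∧ β < 0 ∧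
    {r : ℝ | r ^ 4 - r ^ 3 - r ^ 2 - r - 1 = 0} = {α, β} ∧
    ∃ γ : ℂ, γ.im ≠ 0 ∧ ‖γ‖ < 1 ∧
      ∀ z : ℂ, z ^ 4 - z ^ 3 - z ^ 2 - z - 1 =
        (z - (α : ℂ)) * (z - (β : ℂ)) * (z - γ) * (z - (starRingEnd ℂ) γ) := by
  obtain ⟨α, ⟨hα₁, hα₂⟩, hα⟩ := exists_pos_root_tetranacciPoly
  obtain ⟨β, ⟨hβ₁, hβ₂⟩, hβ⟩ := exists_neg_root_tetranacciPoly
  have hαβ : α ≠ β := by linarith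
  have hfactor := tetranacciPoly_eq_mul_of_isRoot hα hβ hαβ
  set b := α + β - 1
  set c := (α + β) ^ 2 - (α + β) - α * β - 1
  have hc : α * β * c = -1 := by
    have h₀ := hfactor 0
    unfold tetranacciPoly at h₀
    linear_combination -h₀
  -- `-2 < α β < -1`
  have hc_half : 1 / 2 < c := by nlinarith
  have hc_lt_one : c < 1 := by nlinarith
  have hdisc : b ^ 2 < 4 * c := by nlinarith
  obtain ⟨γ, hγim, hγnorm, hγ⟩ := exists_conj_roots_of_discrim_neg hdisc
  refine ⟨α, β, by linarith, hα₁, hα₂, hβ₁, by linarith, ?_, γ, hγim, ?_, fun z => ?_⟩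
  · ext r
    have hq := quadratic_pos_of_discrim_neg hdisc r
    simp only [Set.mem_ofPred_eq, Set.mem_insert_iff, Set.mem_singleton_iff]
    rw [← tetranacciPoly, hfactor r]
    simp [sub_eq_zero, hq.ne']
  · nlinarith [norm_nonneg γ]
  · have hfactorℂ := tetranacciPoly_eq_mul_of_isRoot (K := ℂ) (α := α) (β := β)
      (by rw [← Complex.ofReal_tetranacciPoly, hα, Complex.ofReal_zero])
      (by rw [← Complex.ofReal_tetranacciPoly, hβ, Complex.ofReal_zero])
      (by exact_mod_cast hαβ) z
    rw [← tetranacciPoly, hfactorℂ, mul_assoc _ (z - γ), ← hγ]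
    push_cast [b, c]
    ring
end
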